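/- arXiv:math/0610657 — 3 statements merged into one kernel-verified Lean document; each statement's English description precedes it below -/
import Mathlib

section
/- Let A be a ring and M a finitely generated right A-module. Then the endomorphism ring R = End_A(M) is weakly finite in each of the following three cases: (a) every finite subset of A is contained in a right Noetherian subring of A; (b) A is commutative; (c) A is weakly finite and M is a projective A-module. -/
/-!
Put `R = Aᵐᵒᵖ`, so that `M` is a finitely generated left `R`-module. Since `Mₙ(End_R M) ≅ End_R(Mⁿ)`
and `Mⁿ` is again finitely generated (and projective if `M` is), it suffices to show that
`End_R N` is Dedekind-finite for every such `N`, i.e. that `fg = 1` forces `gf = 1`.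

(a) The coefficients expressing `f` and `g` on a finite generating set of `N` lie in a Noetherian
subring `T` of `R`; the `T`-span of the generators is a Noetherian `T`-module stable under `f` and
`g`, on which the surjective endomorphism `f` is therefore injective.
(b) Commutative rings have the Orzech property: surjective endomorphisms of finitely generated
modules are injective.
(c) `N` is a retract `πσ = 1` of some `Rᵏ`, whose endomorphism ring `Mₖ(A)` is Dedekind-finite.
If `fg = 1` on `N`, then `F := σfπ + (1 - σπ)` and `G := σgπ + (1 - σπ)` satisfy `FG = 1`, hence
`GF = 1`, and `gf = π(GF)σ = πσ = 1`.
-/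

noncomputable section

open MulOpposite

universe u v

/-- A ring `R` is weakly (stably) finite if `XY = 1` implies `YX = 1` for square
matrices over `R`. -/
def WeaklyFinite (R : Type*) [Ring R] : Prop :=
  ∀ (n : ℕ) (X Y : Matrix (Fin n) (Fin n) R), X * Y = 1 → Y * X = 1

open Submodule

theorem weaklyFinite_iff_isStablyFiniteRing (R : Type*) [Ring R] :
    WeaklyFinite R ↔ IsStablyFiniteRing R := by
  simp only [WeaklyFinite, _root_.isStablyFiniteRing_iff, isDedekindFiniteMonoid_iff]

instance Module.Projective.pi {R : Type*} [Ring R] {ι : Type*} [Finite ι] (N : ι → Type*)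
    [∀ i, AddCommGroup (N i)] [∀ i, Module R (N i)] [∀ i, Module.Projective R (N i)] :
    Module.Projective R (∀ i, N i) := by
  classical
  have := Fintype.ofFinite ι
  exact .of_equiv DFinsupp.linearEquivFunOnFintype

theorem Submodule.exists_finset_forall_mem_span_subring {R M : Type*} [Ring R] [AddCommGroup M]
    [Module R M] {ι κ : Type*} [Fintype ι] [Fintype κ] (m : ι → M) (x : κ → M)
    (hx : ∀ k, x k ∈ span R (Set.range m)) :
    ∃ s : Finset R, ∀ T : Subring R, (s : Set R) ⊆ T → ∀ k, x k ∈ span T (Set.range m) := by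
  classical
  choose c hc using fun k ↦ (mem_span_range_iff_exists_fun R).mp (hx k)
  refine ⟨Finset.univ.image (Function.uncurry c), fun T hsT k ↦ ?_⟩
  have hcT (i : ι) : c k i ∈ T := hsT (by simp)
  exact (mem_span_range_iff_exists_fun T).mpr ⟨fun i ↦ ⟨c k i, hcT i⟩, hc k⟩

def IsLocallyNoetherianRing (R : Type*) [Ring R] : Prop :=
  ∀ s : Finset R, ∃ T : Subring R, (s : Set R) ⊆ T ∧ IsNoetherianRing T

theorem isLocallyNoetherianRing_mulOpposite {A : Type*} [Ring A]
    (h : ∀ s : Finset A, ∃ S : Subring A, (s : Set A) ⊆ S ∧ IsNoetherianRing Sᵐᵒᵖ) :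
    IsLocallyNoetherianRing Aᵐᵒᵖ := by
  classical
  intro s
  obtain ⟨S, hsS, hS⟩ := h (s.image unop)
  refine ⟨S.op, fun x hx ↦ hsS ?_, isNoetherianRing_of_ringEquiv _ S.mopRingEquivOp⟩
  simpa using Finset.mem_image_of_mem unop hx

namespace Module.End

section Semiring

variable {R M : Type*} [Semiring R] [AddCommMonoid M] [Module R M]

theorem isStablyFiniteRing_iff_forall_isDedekindFiniteMonoid_pi :
    IsStablyFiniteRing (Module.End R M) ↔
      ∀ n, IsDedekindFiniteMonoid (Module.End R (Fin n → M)) := by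
  simp_rw [_root_.isStablyFiniteRing_iff,
    MulEquivClass.isDedekindFiniteMonoid_iff (endVecRingEquivMatrixEnd (Fin _) R M)]

theorem isDedekindFiniteMonoid_of_injective_of_surjective
    (h : ∀ f : Module.End R M, Function.Surjective f → Function.Injective f) :
    IsDedekindFiniteMonoid (Module.End R M) where
  mul_eq_one_symm {f g} hfg := by
    have hfg' (x : M) : f (g x) = x := LinearMap.congr_fun hfg x
    exact LinearMap.ext fun x ↦ h f (fun y ↦ ⟨g y, hfg' y⟩) (hfg' (f x))

theorem isStablyFiniteRing_of_orzechProperty [OrzechProperty R] [Module.Finite R M] :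
    IsStablyFiniteRing (Module.End R M) :=
  isStablyFiniteRing_iff_forall_isDedekindFiniteMonoid_pi.mpr fun _ ↦
    isDedekindFiniteMonoid_of_injective_of_surjective
      OrzechProperty.injective_of_surjective_endomorphism

end Semiring

section Ring

variable {R M : Type*} [Ring R] [AddCommGroup M] [Module R M]

theorem isDedekindFiniteMonoid_of_retract {N : Type*} [AddCommGroup N] [Module R N]
    [IsDedekindFiniteMonoid (Module.End R N)]
    (π : N →ₗ[R] M) (σ : M →ₗ[R] N) (hπσ : π ∘ₗ σ = LinearMap.id) :
    IsDedekindFiniteMonoid (Module.End R M) where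
  mul_eq_one_symm {f g} hfg := by
    have hπσ' (x : M) : π (σ x) = x := LinearMap.congr_fun hπσ x
    have hfg' (x : M) : f (g x) = x := LinearMap.congr_fun hfg x
    let F : Module.End R N := σ ∘ₗ f ∘ₗ π + (1 - σ ∘ₗ π)
    let G : Module.End R N := σ ∘ₗ g ∘ₗ π + (1 - σ ∘ₗ π)
    have hFG : F * G = 1 := by
      ext y
      simp [F, G, hπσ', hfg']
    calc g * f = π ∘ₗ (G * F) ∘ₗ σ := by
          ext x
          simp [F, G, hπσ']
      _ = 1 := by rw [mul_eq_one_symm hFG]; exact hπσ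

theorem isStablyFiniteRing_of_projective [IsStablyFiniteRing R] [Module.Finite R M]
    [Module.Projective R M] : IsStablyFiniteRing (Module.End R M) := by
  refine isStablyFiniteRing_iff_forall_isDedekindFiniteMonoid_pi.mpr fun n ↦ ?_
  obtain ⟨k, π, hπ⟩ := Module.Finite.exists_fin' R (Fin n → M)
  obtain ⟨σ, hσ⟩ := π.exists_rightInverse_of_surjective (LinearMap.range_eq_top.2 hπ)
  exact isDedekindFiniteMonoid_of_retract π σ hσ

theorem mul_eq_one_symm_of_mem_span_subring {ι : Type*} [Finite ι] (T : Subring R)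
    [OrzechProperty T] {m : ι → M} (hm : span R (Set.range m) = ⊤) {f g : Module.End R M}
    (hfg : f * g = 1) (hf : ∀ i, f (m i) ∈ span T (Set.range m))
    (hg : ∀ i, g (m i) ∈ span T (Set.range m)) : g * f = 1 := by
  set N := span T (Set.range m)
  have mapsTo (h : Module.End R M) (hh : ∀ i, h (m i) ∈ N) (x : M) (hx : x ∈ N) : h x ∈ N :=
    (span_le (p := N.comap (h.restrictScalars T))).mpr (Set.range_subset_iff.mpr hh) hx
  let f' := (f.restrictScalars T).restrict (mapsTo f hf)
  let g' := (g.restrictScalars T).restrict (mapsTo g hg)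
  have : Module.Finite T N := .span_of_finite T (Set.finite_range m)
  have hf'g' : f' * g' = 1 := LinearMap.ext fun x ↦ Subtype.ext (LinearMap.congr_fun hfg x)
  have hg'f' : g' * f' = 1 := (isDedekindFiniteMonoid_of_injective_of_surjective
    OrzechProperty.injective_of_surjective_endomorphism).mul_eq_one_symm hf'g'
  exact LinearMap.ext_on_range hm fun i ↦
    congr_arg Subtype.val (LinearMap.congr_fun hg'f' ⟨m i, subset_span ⟨i, rfl⟩⟩)

end Ring

end Module.End

namespace IsLocallyNoetherianRing

variable {R M : Type*} [Ring R] [AddCommGroup M] [Module R M] [Module.Finite R M]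

theorem isDedekindFiniteMonoid_moduleEnd (hR : IsLocallyNoetherianRing R) :
    IsDedekindFiniteMonoid (Module.End R M) where
  mul_eq_one_symm {f g} hfg := by
    obtain ⟨k, m, hm⟩ := Module.Finite.exists_fin (R := R) (M := M)
    obtain ⟨s, hs⟩ := exists_finset_forall_mem_span_subring m (Sum.elim (f ∘ m) (g ∘ m))
      fun _ ↦ hm ▸ mem_top
    obtain ⟨T, hsT, _⟩ := hR s
    exact Module.End.mul_eq_one_symm_of_mem_span_subring T hm hfg
      (fun i ↦ hs T hsT (.inl i)) (fun i ↦ hs T hsT (.inr i))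

theorem isStablyFiniteRing_moduleEnd (hR : IsLocallyNoetherianRing R) :
    IsStablyFiniteRing (Module.End R M) :=
  Module.End.isStablyFiniteRing_iff_forall_isDedekindFiniteMonoid_pi.mpr fun _ ↦
    hR.isDedekindFiniteMonoid_moduleEnd

end IsLocallyNoetherianRing

/-- **Lemma 2.1.** Let `A` be a ring and `M` a finitely generated right `A`-module.
The endomorphism ring `R = End_A(M)` is weakly finite in each of the following three
cases: (a) every finite subset of `A` is contained in a right Noetherian subring;
(b) `A` is commutative; (c) `A` is weakly finite and `M` is projective. -/
theorem endomorphism_ring_weakly_finite :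
    (∀ (A : Type u) (M : Type v) [Ring A] [AddCommGroup M] [Module Aᵐᵒᵖ M],
      Module.Finite Aᵐᵒᵖ M →
      (∀ s : Finset A, ∃ S : Subring A, (↑s : Set A) ⊆ (S : Set A) ∧
        IsNoetherianRing (↥S)ᵐᵒᵖ) →
      WeaklyFinite (Module.End Aᵐᵒᵖ M)) ∧
    (∀ (A : Type u) (M : Type v) [CommRing A] [AddCommGroup M] [Module Aᵐᵒᵖ M],
      Module.Finite Aᵐᵒᵖ M →
      WeaklyFinite (Module.End Aᵐᵒᵖ M)) ∧
    (∀ (A : Type u) (M : Type v) [Ring A] [AddCommGroup M] [Module Aᵐᵒᵖ M],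
      Module.Finite Aᵐᵒᵖ M → WeaklyFinite A → Module.Projective Aᵐᵒᵖ M →
      WeaklyFinite (Module.End Aᵐᵒᵖ M)) := by
  simp only [weaklyFinite_iff_isStablyFiniteRing]
  refine ⟨fun A M _ _ _ _ hA ↦ ?_, fun A M _ _ _ _ ↦ ?_, fun A M _ _ _ _ hA _ ↦ ?_⟩
  · exact (isLocallyNoetherianRing_mulOpposite hA).isStablyFiniteRing_moduleEnd
  · exact Module.End.isStablyFiniteRing_of_orzechProperty
  · exact Module.End.isStablyFiniteRing_of_projective

end
end

section
/- Let R be a ring, M a finitely generated right R-module, and e_1,…,e_n and e'_1,…,e'_n two systems of generators of M with the same number n of elements. For a generating system f_1,…,f_n of M, let I_{f_1,…,f_n} denote the two-sided ideal of R generated by all elements of R occurring as a coefficient in a zero linear combination f_1x_1 + ⋯ + f_nx_n = 0 with x_1,…,x_n ∈ R. Suppose I is a two-sided ideal of R with I_{e_1,…,e_n} ⊆ I and the quotient ring R/I is weakly n-finite. Then I_{e'_1,…,e'_n} ⊆ I. -/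
noncomputable section

open MulOpposite

universe u v

/-- For a system of generators `e : Fin n → M` of a right `R`-module `M`, the
two-sided ideal of `R` generated by all elements of `R` occurring as a coefficient in
a zero linear combination `e₁x₁ + ⋯ + eₙxₙ = 0`. -/
def coeffIdeal {R : Type u} [Ring R] {M : Type v} [AddCommGroup M] [Module Rᵐᵒᵖ M]
    (n : ℕ) (e : Fin n → M) : TwoSidedIdeal R :=
  TwoSidedIdeal.span {r : R | ∃ x : Fin n → R, (∑ i, op (x i) • e i) = 0 ∧ ∃ j, x j = r}

theorem mem_coeffIdeal_of_rel {R : Type u} [Ring R] {M : Type v} [AddCommGroup M]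
    [Module Rᵐᵒᵖ M] {n : ℕ} {e : Fin n → M} {x : Fin n → R}
    (hx : (∑ i, op (x i) • e i) = 0) (j : Fin n) : x j ∈ coeffIdeal n e :=
  TwoSidedIdeal.subset_span ⟨x, hx, j, rfl⟩

/-- **Lemma 2.3.** Let `M` be a finitely generated right `R`-module and
`e₁,…,eₙ` and `e'₁,…,e'ₙ` two systems of generators of `M` with the same number of
elements.  Suppose `I` is a two-sided ideal of `R` containing the coefficient ideal
`I_{e₁,…,eₙ}` and such that the quotient ring `R/I` is weakly `n`-finite (phrased via
matrix congruences modulo `I`).  Then `I_{e'₁,…,e'ₙ} ⊆ I`. -/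
theorem coeffIdeal_le_of_weakly_finite_quotient
    (R : Type u) [Ring R] (M : Type v) [AddCommGroup M] [Module Rᵐᵒᵖ M]
    (n : ℕ) (e e' : Fin n → M)
    (he : Submodule.span Rᵐᵒᵖ (Set.range e) = ⊤)
    (he' : Submodule.span Rᵐᵒᵖ (Set.range e') = ⊤)
    (I : TwoSidedIdeal R)
    (hIe : coeffIdeal n e ≤ I)
    (hWF : ∀ X Y : Matrix (Fin n) (Fin n) R,
      (∀ i j, (X * Y - 1) i j ∈ I) → ∀ i j, (Y * X - 1) i j ∈ I) :
    coeffIdeal n e' ≤ I := by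
  classical
  -- express e' in terms of e and vice versa
  have hA : ∀ i : Fin n, ∃ a : Fin n → R, e' i = ∑ k, op (a k) • e k := by
    intro i
    have : e' i ∈ Submodule.span Rᵐᵒᵖ (Set.range e) := he ▸ Submodule.mem_top
    obtain ⟨c, hc⟩ := (Submodule.mem_span_range_iff_exists_fun Rᵐᵒᵖ).1 this
    exact ⟨fun k => (c k).unop, by simp [← hc]⟩
  have hB : ∀ j : Fin n, ∃ b : Fin n → R, e j = ∑ i, op (b i) • e' i := by
    intro j
    have : e j ∈ Submodule.span Rᵐᵒᵖ (Set.range e') := he' ▸ Submodule.mem_top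
    obtain ⟨c, hc⟩ := (Submodule.mem_span_range_iff_exists_fun Rᵐᵒᵖ).1 this
    exact ⟨fun i => (c i).unop, by simp [← hc]⟩
  choose a ha using hA
  choose b hb using hB
  set A : Matrix (Fin n) (Fin n) R := fun k i => a i k with hAdef
  set B : Matrix (Fin n) (Fin n) R := fun i j => b j i with hBdef
  -- e j = ∑ k (A*B) k j • e k
  have key : ∀ k j, (A * B - 1) k j ∈ I := by
    intro k j
    refine hIe (mem_coeffIdeal_of_rel (x := fun k => (A * B - 1) k j) ?_ k)
    have : (∑ k, op ((A * B) k j) • e k) = e j := by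
      calc (∑ k, op ((A * B) k j) • e k)
          = ∑ k, ∑ i, op (A k i * B i j) • e k := by
            simp [Matrix.mul_apply, Finset.op_sum, Finset.sum_smul]
        _ = ∑ i, op (b j i) • ∑ k, op (a i k) • e k := by
            rw [Finset.sum_comm]
            simp [Finset.smul_sum, mul_smul, hAdef, hBdef]
        _ = ∑ i, op (b j i) • e' i := by simp [← ha]
        _ = e j := (hb j).symm
    have h1 : (∑ k, op (((A * B - 1)) k j) • e k) = 0 := by
      simp only [Matrix.sub_apply, op_sub, sub_smul, Finset.sum_sub_distrib, this]
      rw [sub_eq_zero]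
      rw [show ∑ k, op ((1 : Matrix (Fin n) (Fin n) R) k j) • e k
          = ∑ k, (if k = j then (1:Rᵐᵒᵖ) else 0) • e k by
        refine Finset.sum_congr rfl fun k _ => ?_
        by_cases h : k = j <;> simp [Matrix.one_apply, h]]
      simp
    exact h1
  have key' : ∀ i j, (B * A - 1) i j ∈ I := hWF A B key
  -- now show the generating set of coeffIdeal n e' is contained in I
  intro r hr
  rw [coeffIdeal, TwoSidedIdeal.mem_span_iff] at hr
  refine hr I ?_
  rintro s ⟨x, hx, j, rfl⟩
  -- y = A.mulVec x has zero combination with e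
  have hy : (∑ k, op ((A.mulVec x) k) • e k) = 0 := by
    calc (∑ k, op ((A.mulVec x) k) • e k)
        = ∑ k, ∑ i, op (A k i * x i) • e k := by
          simp [Matrix.mulVec, dotProduct, Finset.op_sum, Finset.sum_smul]
      _ = ∑ i, op (x i) • ∑ k, op (a i k) • e k := by
          rw [Finset.sum_comm]
          simp [Finset.smul_sum, mul_smul, hAdef]
      _ = ∑ i, op (x i) • e' i := by simp [← ha]
      _ = 0 := hx
  have hyI : ∀ k, (A.mulVec x) k ∈ I := fun k => hIe (mem_coeffIdeal_of_rel hy k)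
  -- x j = ∑ k B j k * (A.mulVec x) k - ∑ k (B*A - 1) j k * x k
  have hdecomp : x j = (∑ k, B j k * (A.mulVec x) k) - ∑ k, (B * A - 1) j k * x k := by
    have h1 : (∑ k, B j k * (A.mulVec x) k) = ∑ k, (B * A) j k * x k := by
      simp only [Matrix.mulVec, dotProduct, Matrix.mul_apply, Finset.mul_sum,
        Finset.sum_mul]
      rw [Finset.sum_comm]
      congr 1; ext k; congr 1; ext i; rw [mul_assoc]
    rw [h1]
    simp only [Matrix.sub_apply, sub_mul, Finset.sum_sub_distrib]
    rw [show (∑ k, (1 : Matrix (Fin n) (Fin n) R) j k * x k) = x j by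
      simp [Matrix.one_apply]]
    abel
  rw [hdecomp]
  refine I.sub_mem (I.finsetSum_mem _ _ fun k _ => I.mul_mem_left _ _ (hyI k))
    (I.finsetSum_mem _ _ fun k _ => I.mul_mem_right _ _ (key' j k))

end
end

section
/- Let H be a weakly finite Hopf algebra over a field k, R a finite dimensional simple k-algebra, and A a finite dimensional H-simple right H-comodule algebra such that A/P is a central simple k-algebra for some maximal ideal P of A. Then R ⊗ A is an H-simple right H-comodule algebra with respect to the comodule structure id ⊗ ρ : R ⊗ A → R ⊗ A ⊗ H. -/
/- Preliminary notions: right `H`-comodule algebras over a Hopf algebra `H`,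
`H`-costable two-sided ideals, `H`-simplicity, semilocal and weakly finite rings,
`(H,A)`-Hopf modules, and freeness of `M/MQ` over `A/Q`. -/

noncomputable section

open TensorProduct MulOpposite

universe u v w

/-- `ρ` is a (coassociative, counital) right `H`-comodule structure on `M`. -/
def IsComodule (k : Type*) [Field k] (H : Type*) [Ring H] [HopfAlgebra k H]
    (M : Type*) [AddCommGroup M] [Module k M] (ρ : M →ₗ[k] M ⊗[k] H) : Prop :=
  (∀ m : M, (TensorProduct.assoc k M H H) ((TensorProduct.map ρ LinearMap.id) (ρ m)) =
      (TensorProduct.map LinearMap.id (Coalgebra.comul (R := k))) (ρ m)) ∧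
  (∀ m : M, (TensorProduct.rid k M)
      ((TensorProduct.map LinearMap.id (Coalgebra.counit (R := k))) (ρ m)) = m)

/-- The canonical image of `X ⊗[k] H` in `A ⊗[k] H`, for a `k`-subspace `X ⊆ A`. -/
def subTensorH (k : Type*) [Field k] (H : Type*) [Ring H] [HopfAlgebra k H]
    {A : Type*} [Ring A] [Algebra k A] (X : Submodule k A) : Submodule k (A ⊗[k] H) :=
  LinearMap.range (TensorProduct.map X.subtype (LinearMap.id : H →ₗ[k] H))

/-- A two-sided ideal `I` of the comodule algebra `(A, ρA)` is `H`-costable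
if `ρA(I) ⊆ I ⊗ H`. -/
def IsCostable (k : Type*) [Field k] (H : Type*) [Ring H] [HopfAlgebra k H]
    {A : Type*} [Ring A] [Algebra k A] (ρA : A →ₐ[k] A ⊗[k] H)
    (I : TwoSidedIdeal A) : Prop :=
  ∀ a ∈ I, ρA a ∈ subTensorH k H ((TwoSidedIdeal.asIdeal I).restrictScalars k)

/-- The comodule algebra `(A, ρA)` is `H`-simple if it has no `H`-costable
two-sided ideals other than `0` and `A`. -/
def IsHSimple (k : Type*) [Field k] (H : Type*) [Ring H] [HopfAlgebra k H]
    {A : Type*} [Ring A] [Algebra k A] (ρA : A →ₐ[k] A ⊗[k] H) : Prop :=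
  ∀ I : TwoSidedIdeal A, IsCostable k H ρA I → I = ⊥ ∨ I = ⊤

/-- A ring is semilocal if its quotient by the Jacobson radical is
semisimple (Artinian). -/
def IsSemilocalRing (R : Type*) [Ring R] : Prop :=
  IsSemisimpleModule R (R ⧸ (⊥ : Ideal R).jacobson)

/-- Condition (C): the ring `(A/Q) ⊗ H` is weakly finite for every maximal (two-sided)
ideal `Q` of `A`.  Since `(A/Q) ⊗ H ≅ (A ⊗ H)/(Q ⊗ H)` (the ground ring `k` being a
field), this is expressed via matrix congruences modulo the image of `Q ⊗ H`. -/
def CondC (k : Type*) [Field k] (H : Type*) [Ring H] [HopfAlgebra k H]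
    (A : Type*) [Ring A] [Algebra k A] : Prop :=
  ∀ Q : TwoSidedIdeal A, IsCoatom Q →
    ∀ (n : ℕ) (X Y : Matrix (Fin n) (Fin n) (A ⊗[k] H)),
      (∀ i j, (X * Y - 1) i j ∈ subTensorH k H ((TwoSidedIdeal.asIdeal Q).restrictScalars k)) →
      ∀ i j, (Y * X - 1) i j ∈ subTensorH k H ((TwoSidedIdeal.asIdeal Q).restrictScalars k)

/-- The right `A`-action of a right `A`-module `M` as a `k`-linear map `M ⊗ A → M`. -/
def rAct (k : Type*) [Field k] {A : Type*} [Ring A] [Algebra k A]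
    (M : Type*) [AddCommGroup M] [Module k M] [Module Aᵐᵒᵖ M] [IsScalarTower k Aᵐᵒᵖ M] :
    M ⊗[k] A →ₗ[k] M :=
  TensorProduct.lift (LinearMap.mk₂ k (fun m a => op a • m)
    (fun m m' a => smul_add (op a) m m')
    (fun c m a => smul_comm (op a) c m)
    (fun m a a' => by simp only [op_add, add_smul])
    (fun c m a => by
      show op (c • a) • m = c • op a • m
      rw [op_smul, smul_assoc]))

/-- The right action of the algebra `A ⊗ H` on `M ⊗ H` (`A` acting on the first
tensorand and `H` by multiplication on the second). -/
def hAct (k : Type*) [Field k] (H : Type*) [Ring H] [HopfAlgebra k H]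
    {A : Type*} [Ring A] [Algebra k A]
    (M : Type*) [AddCommGroup M] [Module k M] [Module Aᵐᵒᵖ M] [IsScalarTower k Aᵐᵒᵖ M] :
    (M ⊗[k] H) ⊗[k] (A ⊗[k] H) →ₗ[k] M ⊗[k] H :=
  (TensorProduct.map (rAct k (A := A) M) (LinearMap.mul' k H)) ∘ₗ
    (TensorProduct.tensorTensorTensorComm k M H A H).toLinearMap

/-- `M` together with `ρM` is an object of `𝓜_A^H`: a right `A`-module with a right
`H`-comodule structure satisfying `ρ_M(ma) = ρ_M(m)ρ_A(a)`. -/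
def IsHopfModule (k : Type*) [Field k] (H : Type*) [Ring H] [HopfAlgebra k H]
    {A : Type*} [Ring A] [Algebra k A] (ρA : A →ₐ[k] A ⊗[k] H)
    (M : Type*) [AddCommGroup M] [Module k M] [Module Aᵐᵒᵖ M] [IsScalarTower k Aᵐᵒᵖ M]
    (ρM : M →ₗ[k] M ⊗[k] H) : Prop :=
  IsComodule k H M ρM ∧
    ∀ (a : A) (m : M), ρM (op a • m) = hAct k H (A := A) M ((ρM m) ⊗ₜ[k] (ρA a))

/-- The submodule `M·Q` of a right `A`-module `M`, for a two-sided ideal `Q ⊆ A`. -/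
def smulIdeal {A : Type u} [Ring A] (M : Type v) [AddCommGroup M] [Module Aᵐᵒᵖ M]
    (Q : TwoSidedIdeal A) : Submodule Aᵐᵒᵖ M :=
  Submodule.span Aᵐᵒᵖ {x : M | ∃ q ∈ Q, ∃ m : M, x = op q • m}

/-- `M/MQ` is a free `A/Q`-module: there is a family of elements of `M` whose image
in `M/MQ` is a basis over `A/Q` (it spans `M` modulo `MQ` and is linearly
independent modulo `Q`). -/
def IsFreeModulo {A : Type u} [Ring A] (M : Type v) [AddCommGroup M] [Module Aᵐᵒᵖ M]
    (Q : TwoSidedIdeal A) : Prop :=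
  ∃ (ι : Type v) (e : ι → M),
    (Submodule.span Aᵐᵒᵖ (Set.range e) ⊔ smulIdeal M Q = ⊤) ∧
    ∀ (s : Finset ι) (x : ι → A),
      (∑ i ∈ s, op (x i) • e i) ∈ smulIdeal M Q → ∀ i ∈ s, x i ∈ Q

end

/-! The operators `a ↦ b * a`, `a ↦ a * b` and `a ↦ f ⇀ a = a₀ f(a₁)` (`f ∈ H*`) on `A` have as
common invariant subspaces exactly the `H`-costable ideals, so `H`-simplicity makes `A` an
irreducible module over the algebra they generate. Its commutant is `k`: an operator `φ` commuting
with them is right multiplication by the central coinvariant element `ω = φ 1`; modulo `P` it is a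
scalar `c`, and `ω - c` generates a costable ideal contained in `P`, so `ω = c`. For such an
irreducible module `M` with commutant `k`, every subspace of `T ⊗ M` invariant under `id ⊗ g` is of
the form `V ⊗ M`: by induction on `dim T`, slicing with a functional `ξ` on `T` maps it onto `0` or
onto `M`, and in the latter case the induced map `M → (T / V₁) ⊗ M` commutes with the operators,
so it is `m ↦ v ⊗ m`. An `H`-costable ideal `I` of `R ⊗ A` is such a subspace, so `I = V ⊗ A`, and
`V` lies in the ideal `{r | r ⊗ 1 ∈ I}` of the simple ring `R`: either `V = 0` or `1 ∈ I`. -/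

noncomputable section

open TensorProduct

section Slice

variable {R : Type*} [CommRing R] {M N P T T' : Type*} [AddCommGroup M] [Module R M]
  [AddCommGroup N] [Module R N] [AddCommGroup P] [Module R P] [AddCommGroup T] [Module R T]
  [AddCommGroup T'] [Module R T']

def rightSlice (f : N →ₗ[R] R) : M ⊗[R] N →ₗ[R] M :=
  (TensorProduct.rid R M).toLinearMap ∘ₗ f.lTensor M

def leftSlice (c : T →ₗ[R] R) : T ⊗[R] M →ₗ[R] M :=
  (TensorProduct.lid R M).toLinearMap ∘ₗ c.rTensor M

@[simp] lemma rightSlice_tmul (f : N →ₗ[R] R) (m : M) (n : N) :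
    rightSlice f (m ⊗ₜ[R] n) = f n • m := by
  simp [rightSlice]

@[simp] lemma leftSlice_tmul (c : T →ₗ[R] R) (t : T) (m : M) :
    leftSlice c (t ⊗ₜ[R] m) = c t • m := by
  simp [leftSlice]

lemma rightSlice_comm (f : N →ₗ[R] R) (x : M ⊗[R] N) :
    rightSlice f x = leftSlice f (TensorProduct.comm R M N x) := by
  induction x using TensorProduct.induction_on with
  | zero => simp
  | tmul m n => simp
  | add x y hx hy => simp only [map_add, hx, hy]

lemma LinearMap.rTensor_lTensor_comm (f : T' →ₗ[R] T) (g : M →ₗ[R] N) (x : T' ⊗[R] M) :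
    f.rTensor N (g.lTensor T' x) = g.lTensor T (f.rTensor M x) := by
  rw [← LinearMap.comp_apply, LinearMap.rTensor_comp_lTensor, ← LinearMap.lTensor_comp_rTensor,
    LinearMap.comp_apply]

lemma leftSlice_lTensor (c : T →ₗ[R] R) (g : M →ₗ[R] N) (x : T ⊗[R] M) :
    leftSlice c (g.lTensor T x) = g (leftSlice c x) := by
  induction x using TensorProduct.induction_on with
  | zero => simp
  | tmul t m => simp
  | add x y hx hy => simp only [map_add, hx, hy]

lemma rightSlice_rTensor (f : N →ₗ[R] R) (g : M →ₗ[R] P) (x : M ⊗[R] N) :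
    rightSlice f (g.rTensor N x) = g (rightSlice f x) := by
  induction x using TensorProduct.induction_on with
  | zero => simp
  | tmul m n => simp
  | add x y hx hy => simp only [map_add, hx, hy]

lemma eq_zero_of_forall_leftSlice_coord_eq_zero {ι : Type*} (b : Module.Basis ι R T)
    (x : T ⊗[R] M) (hx : ∀ i, leftSlice (b.coord i) x = 0) : x = 0 := by
  classical
  let e : T ⊗[R] M ≃ₗ[R] (ι →₀ M) :=
    LinearEquiv.rTensor M b.repr ≪≫ₗ TensorProduct.finsuppScalarLeft R M ι
  have he : ∀ z i, e z i = leftSlice (b.coord i) z := by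
    intro z i
    induction z using TensorProduct.induction_on with
    | zero => simp
    | tmul t m => simp [e, TensorProduct.finsuppScalarLeft_apply_tmul_apply]
    | add x y hx hy => simp only [map_add, Finsupp.add_apply, hx, hy]
  exact e.map_eq_zero_iff.1 (Finsupp.ext fun i => (he x i).trans (hx i))

lemma eq_zero_of_forall_rightSlice_eq_zero [Module.Free R N] (x : M ⊗[R] N)
    (hx : ∀ f : N →ₗ[R] R, rightSlice f x = 0) : x = 0 := by
  refine (TensorProduct.comm R M N).map_eq_zero_iff.1 <|
    eq_zero_of_forall_leftSlice_coord_eq_zero (Module.Free.chooseBasis R N) _ fun i => ?_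
  rw [← rightSlice_comm, hx]

end Slice

section TensorRight

variable {R : Type*} [CommRing R] {M N T T' : Type*} [AddCommGroup M] [Module R M]
  [AddCommGroup N] [Module R N] [AddCommGroup T] [Module R T] [AddCommGroup T'] [Module R T']

def Submodule.tensorRight (V : Submodule R T) (M : Type*) [AddCommGroup M] [Module R M] :
    Submodule R (T ⊗[R] M) :=
  LinearMap.range (V.subtype.rTensor M)

namespace Submodule

lemma tmul_mem_tensorRight {V : Submodule R T} {t : T} (ht : t ∈ V) (m : M) :
    t ⊗ₜ[R] m ∈ V.tensorRight M :=
  ⟨⟨t, ht⟩ ⊗ₜ[R] m, rfl⟩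

lemma tensorRight_le_iff {V : Submodule R T} {U : Submodule R (T ⊗[R] M)} :
    V.tensorRight M ≤ U ↔ ∀ t ∈ V, ∀ m : M, t ⊗ₜ[R] m ∈ U := by
  refine ⟨fun h t ht m => h (tmul_mem_tensorRight ht m), fun h => ?_⟩
  rintro _ ⟨y, rfl⟩
  induction y using TensorProduct.induction_on with
  | zero => simp
  | tmul t m => exact h t t.2 m
  | add x y hx hy => simpa only [map_add] using U.add_mem hx hy

lemma tensorRight_mono {V W : Submodule R T} (h : V ≤ W) :
    V.tensorRight M ≤ W.tensorRight M :=
  tensorRight_le_iff.2 fun _ ht m => tmul_mem_tensorRight (h ht) m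

lemma map_rTensor_tensorRight (j : T →ₗ[R] T') (V : Submodule R T) :
    (V.tensorRight M).map (j.rTensor M) = (V.map j).tensorRight M := by
  have hj : j ∘ₗ V.subtype = (V.map j).subtype ∘ₗ j.submoduleMap V := rfl
  rw [tensorRight, tensorRight, ← LinearMap.range_comp, ← LinearMap.rTensor_comp, hj,
    LinearMap.rTensor_comp, LinearMap.range_comp_of_range_eq_top]
  exact LinearMap.range_eq_top.2 <| LinearMap.rTensor_surjective M fun ⟨_, t, ht, rfl⟩ =>
    ⟨⟨t, ht⟩, rfl⟩

lemma ker_rTensor_of_surjective {g : T →ₗ[R] T'} (hg : Function.Surjective g) :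
    LinearMap.ker (g.rTensor M) = (LinearMap.ker g).tensorRight M :=
  ((rTensor_exact M (LinearMap.exact_subtype_ker_map g) hg).linearMap_ker_eq).trans rfl

lemma ker_rTensor_mkQ (V : Submodule R T) :
    LinearMap.ker (V.mkQ.rTensor M) = V.tensorRight M := by
  rw [ker_rTensor_of_surjective V.mkQ_surjective, ker_mkQ]

lemma mem_tensorRight_iff [Module.Free R N] (W : Submodule R M) (x : M ⊗[R] N) :
    x ∈ W.tensorRight N ↔ ∀ f : N →ₗ[R] R, rightSlice f x ∈ W := by
  rw [← ker_rTensor_mkQ, LinearMap.mem_ker]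
  refine ⟨fun hx f => ?_, fun hx => eq_zero_of_forall_rightSlice_eq_zero _ fun f => ?_⟩
  · rw [← Submodule.Quotient.mk_eq_zero, ← mkQ_apply, ← rightSlice_rTensor, hx, map_zero]
  · rw [rightSlice_rTensor, mkQ_apply, Submodule.Quotient.mk_eq_zero]
    exact hx f

end Submodule

lemma ker_leftSlice_of_surjective {ξ : T →ₗ[R] R} (hξ : Function.Surjective ξ) :
    LinearMap.ker (leftSlice (M := M) ξ) = (LinearMap.ker ξ).tensorRight M := by
  rw [leftSlice, LinearEquiv.ker_comp, Submodule.ker_rTensor_of_surjective hξ]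

end TensorRight

section Invariant

variable {k M T T' : Type*} [Field k] [AddCommGroup M] [Module k M] [AddCommGroup T] [Module k T]
  [AddCommGroup T'] [Module k T'] {S : Set (Module.End k M)}

def Submodule.IsInvariant {R X : Type*} [Semiring R] [AddCommMonoid X] [Module R X]
    (U : Submodule R X) (S : Set (Module.End R X)) : Prop :=
  ∀ g ∈ S, ∀ x ∈ U, g x ∈ U

lemma Submodule.IsInvariant.comap_rTensor {U : Submodule k (T ⊗[k] M)}
    (hU : U.IsInvariant (LinearMap.lTensor T '' S)) (j : T' →ₗ[k] T) :
    (U.comap (j.rTensor M)).IsInvariant (LinearMap.lTensor T' '' S) := by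
  rintro _ ⟨g, hg, rfl⟩ x hx
  rw [Submodule.mem_comap, LinearMap.rTensor_lTensor_comm]
  exact hU _ ⟨g, hg, rfl⟩ _ hx

lemma Submodule.IsInvariant.map_leftSlice {U : Submodule k (T ⊗[k] M)}
    (hU : U.IsInvariant (LinearMap.lTensor T '' S)) (ξ : T →ₗ[k] k) :
    (U.map (leftSlice ξ)).IsInvariant S := by
  rintro g hg _ ⟨u, hu, rfl⟩
  exact ⟨_, hU _ ⟨g, hg, rfl⟩ u hu, leftSlice_lTensor ξ g u⟩

lemma exists_eq_tmul_of_comp_eq (hcent : S.centralizer ⊆ Set.range (algebraMap k (Module.End k M)))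
    [FiniteDimensional k T] (p : M →ₗ[k] T ⊗[k] M)
    (hp : ∀ g ∈ S, p ∘ₗ g = g.lTensor T ∘ₗ p) :
    ∃ v : T, ∀ m, p m = v ⊗ₜ[k] m := by
  let b := Module.finBasis k T
  have hscalar : ∀ i, ∃ c : k, ∀ m, leftSlice (b.coord i) (p m) = c • m := by
    intro i
    have hmem : leftSlice (b.coord i) ∘ₗ p ∈ S.centralizer := fun g hg => by
      ext m
      simp only [Module.End.mul_apply, LinearMap.comp_apply, ← leftSlice_lTensor,
        ← LinearMap.comp_apply (g.lTensor T), ← hp g hg]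
    obtain ⟨c, hc⟩ := hcent hmem
    exact ⟨c, fun m => by
      rw [← LinearMap.comp_apply, ← hc, Module.algebraMap_end_apply]⟩
  choose c hc using hscalar
  refine ⟨b.equivFun.symm c, fun m => sub_eq_zero.1 <|
    eq_zero_of_forall_leftSlice_coord_eq_zero b _ fun i => ?_⟩
  rw [map_sub, hc, leftSlice_tmul, Module.Basis.coord_apply, ← Module.Basis.equivFun_apply,
    LinearEquiv.apply_symm_apply, sub_self]

lemma exists_linearMap_apply_eq_of_map_eq_top {X Y : Type*} [AddCommGroup X] [Module k X]
    [AddCommGroup Y] [Module k Y] {U : Submodule k X} {π : X →ₗ[k] M} {σ : X →ₗ[k] Y}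
    (hπ : U.map π = ⊤) (hker : ∀ u ∈ U, π u = 0 → σ u = 0) :
    ∃ p : M →ₗ[k] Y, ∀ u ∈ U, p (π u) = σ u := by
  obtain ⟨s, hs⟩ := LinearMap.exists_rightInverse_of_surjective (π.domRestrict U) <|
    (LinearMap.range_domRestrict U π).trans hπ
  refine ⟨σ ∘ₗ U.subtype ∘ₗ s, fun u hu => ?_⟩
  have hπs : π (s (π u)) = π u := LinearMap.congr_fun hs (π u)
  have := hker _ (sub_mem (s (π u)).2 hu) (by rw [map_sub, hπs, sub_self])
  rwa [map_sub, sub_eq_zero] at this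

lemma exists_eq_tensorRight_of_map_leftSlice_eq_top
    (hcent : S.centralizer ⊆ Set.range (algebraMap k (Module.End k M)))
    [FiniteDimensional k T] {U : Submodule k (T ⊗[k] M)}
    (hU : U.IsInvariant (LinearMap.lTensor T '' S)) {ξ : T →ₗ[k] k} {V₁ : Submodule k T}
    (hπ : U.map (leftSlice ξ) = ⊤) (hK : U ⊓ LinearMap.ker (leftSlice ξ) = V₁.tensorRight M) :
    ∃ V : Submodule k T, U = V.tensorRight M := by
  set π : T ⊗[k] M →ₗ[k] M := leftSlice ξ
  set σ : T ⊗[k] M →ₗ[k] (T ⧸ V₁) ⊗[k] M := V₁.mkQ.rTensor M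
  have hσ : LinearMap.ker σ = V₁.tensorRight M := Submodule.ker_rTensor_mkQ V₁
  have hsurj : ∀ m, ∃ u ∈ U, π u = m := fun m => by
    simpa using (hπ ▸ Submodule.mem_top : m ∈ U.map π)
  obtain ⟨p, hp⟩ := exists_linearMap_apply_eq_of_map_eq_top hπ (σ := σ) fun u hu hu0 => by
    rw [← LinearMap.mem_ker, hσ, ← hK]
    exact ⟨hu, hu0⟩
  obtain ⟨vq, hvq⟩ := exists_eq_tmul_of_comp_eq hcent p fun g hg => LinearMap.ext fun m => by
    obtain ⟨u, hu, rfl⟩ := hsurj m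
    calc p (g (π u)) = p (π (g.lTensor T u)) := by rw [leftSlice_lTensor]
      _ = σ (g.lTensor T u) := hp _ (hU _ ⟨g, hg, rfl⟩ u hu)
      _ = g.lTensor _ (σ u) := LinearMap.rTensor_lTensor_comm _ _ _
      _ = g.lTensor _ (p (π u)) := by rw [hp u hu]
  obtain ⟨v, rfl⟩ := V₁.mkQ_surjective vq
  have hdiff : ∀ u ∈ U, u - v ⊗ₜ[k] π u ∈ V₁.tensorRight M := fun u hu => by
    rw [← hσ, LinearMap.mem_ker, map_sub, ← hp u hu, hvq]
    simp [σ]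
  have hKU : V₁.tensorRight M ≤ U := hK ▸ inf_le_left
  have hv : ∀ m, v ⊗ₜ[k] m ∈ U := fun m => by
    obtain ⟨u, hu, rfl⟩ := hsurj m
    simpa using sub_mem hu (hKU (hdiff u hu))
  refine ⟨V₁ ⊔ Submodule.span k {v}, le_antisymm (fun u hu => ?_) ?_⟩
  · simpa using add_mem (Submodule.tensorRight_mono le_sup_left (hdiff u hu))
      (Submodule.tmul_mem_tensorRight
        (Submodule.mem_sup_right (Submodule.mem_span_singleton_self v)) (π u))
  · refine Submodule.tensorRight_le_iff.2 fun t ht m => ?_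
    obtain ⟨t₁, ht₁, _, hcv, rfl⟩ := Submodule.mem_sup.1 ht
    obtain ⟨c, rfl⟩ := Submodule.mem_span_singleton.1 hcv
    rw [add_tmul, smul_tmul]
    exact add_mem (hKU (Submodule.tmul_mem_tensorRight ht₁ m)) (hv _)

theorem exists_eq_tensorRight_of_isInvariant
    (hirr : ∀ N : Submodule k M, N.IsInvariant S → N = ⊥ ∨ N = ⊤)
    (hcent : S.centralizer ⊆ Set.range (algebraMap k (Module.End k M)))
    [FiniteDimensional k T] (U : Submodule k (T ⊗[k] M))
    (hU : U.IsInvariant (LinearMap.lTensor T '' S)) :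
    ∃ V : Submodule k T, U = V.tensorRight M := by
  obtain ⟨n, hn⟩ : ∃ n, Module.finrank k T = n := ⟨_, rfl⟩
  induction n using Nat.strong_induction_on generalizing T with
  | _ n ih =>
  rcases subsingleton_or_nontrivial T with hT | hT
  · exact ⟨⊥, Subsingleton.elim _ _⟩
  obtain ⟨t, ht⟩ := exists_ne (0 : T)
  obtain ⟨ξ, hξt⟩ : ∃ ξ : Module.Dual k T, ξ t ≠ 0 := by
    by_contra! h
    exact ht ((Module.forall_dual_apply_eq_zero_iff k t).1 h)
  have hξ : Function.Surjective ξ := fun c => ⟨(c / ξ t) • t, by simp [hξt]⟩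
  have hrank : Module.finrank k (LinearMap.ker ξ) < n := hn ▸ Submodule.finrank_lt fun h =>
    hξt (LinearMap.mem_ker.1 (h ▸ Submodule.mem_top))
  obtain ⟨V', hV'⟩ := ih _ hrank (U.comap ((LinearMap.ker ξ).subtype.rTensor M))
    (hU.comap_rTensor _) rfl
  have hK : U ⊓ LinearMap.ker (leftSlice ξ) = (V'.map (LinearMap.ker ξ).subtype).tensorRight M := by
    rw [ker_leftSlice_of_surjective hξ, inf_comm, Submodule.tensorRight,
      ← Submodule.map_comap_eq, hV', Submodule.map_rTensor_tensorRight]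
  rcases hirr _ (hU.map_leftSlice ξ) with h | h
  · refine ⟨_, (inf_eq_left.2 fun u hu => ?_).symm.trans hK⟩
    simpa [h] using Submodule.mem_map_of_mem (f := leftSlice ξ) hu
  · exact exists_eq_tensorRight_of_map_leftSlice_eq_top hcent hU h hK

end Invariant

section ComoduleAlgebra

variable {k : Type*} [Field k]

def dualAction {M H : Type*} [AddCommGroup M] [Module k M] [AddCommGroup H] [Module k H]
    (ρ : M →ₗ[k] M ⊗[k] H) (f : H →ₗ[k] k) : Module.End k M :=
  rightSlice f ∘ₗ ρ

variable {A H : Type*} [Ring A] [Algebra k A]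

def costableOps [AddCommGroup H] [Module k H] (ρ : A →ₗ[k] A ⊗[k] H) : Set (Module.End k A) :=
  Set.range (LinearMap.mulLeft k) ∪ Set.range (LinearMap.mulRight k) ∪ Set.range (dualAction ρ)

section Ops

variable [AddCommGroup H] [Module k H] (ρ : A →ₗ[k] A ⊗[k] H)

lemma mulLeft_mem_costableOps (a : A) : LinearMap.mulLeft k a ∈ costableOps ρ :=
  Or.inl (Or.inl ⟨a, rfl⟩)

lemma mulRight_mem_costableOps (a : A) : LinearMap.mulRight k a ∈ costableOps ρ :=
  Or.inl (Or.inr ⟨a, rfl⟩)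

lemma dualAction_mem_costableOps (f : H →ₗ[k] k) : dualAction ρ f ∈ costableOps ρ :=
  Or.inr ⟨f, rfl⟩

end Ops

lemma rightSlice_mul_tmul_one [Ring H] [Algebra k H] (f : H →ₗ[k] k) (y : A ⊗[k] H) (ω : A) :
    rightSlice f (y * ω ⊗ₜ[k] (1 : H)) = rightSlice f y * ω := by
  induction y using TensorProduct.induction_on with
  | zero => simp
  | tmul a h => simp [Algebra.TensorProduct.tmul_mul_tmul]
  | add y z hy hz => simp only [add_mul, map_add, hy, hz]

lemma LinearMap.lTensor_mulLeft (R : Type*) [Ring R] [Algebra k R] (a : A) :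
    (LinearMap.mulLeft k a).lTensor R = LinearMap.mulLeft k ((1 : R) ⊗ₜ[k] a) :=
  TensorProduct.ext' fun r b => by simp [Algebra.TensorProduct.tmul_mul_tmul]

lemma LinearMap.lTensor_mulRight (R : Type*) [Ring R] [Algebra k R] (a : A) :
    (LinearMap.mulRight k a).lTensor R = LinearMap.mulRight k ((1 : R) ⊗ₜ[k] a) :=
  TensorProduct.ext' fun r b => by simp [Algebra.TensorProduct.tmul_mul_tmul]

lemma dualAction_lTensor (R : Type*) [Ring R] [Algebra k R] [Ring H] [Algebra k H]
    (ρA : A →ₐ[k] A ⊗[k] H) (f : H →ₗ[k] k) :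
    dualAction (((Algebra.TensorProduct.assoc k k k R A H).symm.toAlgHom).comp
        (Algebra.TensorProduct.map (AlgHom.id k R) ρA)).toLinearMap f =
      (dualAction ρA.toLinearMap f).lTensor R := by
  refine TensorProduct.ext' fun r a => ?_
  simp only [dualAction, LinearMap.comp_apply, AlgHom.toLinearMap_apply, AlgHom.comp_apply,
    Algebra.TensorProduct.map_tmul, AlgHom.id_apply, LinearMap.lTensor_tmul]
  induction ρA a using TensorProduct.induction_on with
  | zero => simp
  | tmul b h => simp [tmul_smul]
  | add y z hy hz => simp only [tmul_add, map_add, hy, hz]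

variable [Ring H] [HopfAlgebra k H] (ρA : A →ₐ[k] A ⊗[k] H)

lemma isCostable_iff (I : TwoSidedIdeal A) :
    IsCostable k H ρA I ↔ ∀ a ∈ I, ∀ f : H →ₗ[k] k, dualAction ρA.toLinearMap f a ∈ I :=
  forall₂_congr fun a _ => Submodule.mem_tensorRight_iff _ (ρA a)

lemma eq_bot_or_eq_top_of_isInvariant_costableOps (hsimple : IsHSimple k H ρA)
    (N : Submodule k A) (hN : N.IsInvariant (costableOps ρA.toLinearMap)) : N = ⊥ ∨ N = ⊤ := by
  let J : TwoSidedIdeal A := .mk' N N.zero_mem N.add_mem N.neg_mem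
    (fun {x y} hy => hN _ (mulLeft_mem_costableOps _ x) y hy)
    (fun {x y} hx => hN _ (mulRight_mem_costableOps _ y) x hx)
  have hJ : ∀ x, x ∈ J ↔ x ∈ N := TwoSidedIdeal.mem_mk' _ _ _ _ _ _
  have hcost : IsCostable k H ρA J := (isCostable_iff ρA J).2 fun a ha f =>
    (hJ _).2 (hN _ (dualAction_mem_costableOps _ f) a ((hJ a).1 ha))
  refine (hsimple J hcost).imp (fun h => ?_) (fun h => ?_)
  · exact (Submodule.eq_bot_iff N).2 fun x hx => (TwoSidedIdeal.mem_bot A).1 (h ▸ (hJ x).2 hx)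
  · exact Submodule.eq_top_iff'.2 fun x => (hJ x).1 (h ▸ TwoSidedIdeal.mem_top A)

lemma eq_zero_of_central_of_coinvariant (hsimple : IsHSimple k H ρA) {P : TwoSidedIdeal A}
    (hP : P ≠ ⊤) {ω : A} (hcent : ∀ a, a * ω = ω * a) (hco : ρA ω = ω ⊗ₜ[k] 1) (hωP : ω ∈ P) :
    ω = 0 := by
  let N := LinearMap.range (LinearMap.mulRight k ω)
  have hN : N.IsInvariant (costableOps ρA.toLinearMap) := by
    rintro _ ((⟨b, rfl⟩ | ⟨b, rfl⟩) | ⟨f, rfl⟩) _ ⟨a, rfl⟩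
    · exact ⟨b * a, by simp [mul_assoc]⟩
    · exact ⟨a * b, by simp [mul_assoc, hcent]⟩
    · exact ⟨dualAction ρA.toLinearMap f a, by
        simp [dualAction, map_mul, hco, rightSlice_mul_tmul_one]⟩
  rcases eq_bot_or_eq_top_of_isInvariant_costableOps ρA hsimple N hN with h | h
  · exact (Submodule.mem_bot k).1 (h ▸ ⟨1, one_mul ω⟩ : ω ∈ (⊥ : Submodule k A))
  · obtain ⟨a, ha⟩ : (1 : A) ∈ N := h ▸ Submodule.mem_top
    exact absurd ((P.one_mem_iff).1 (ha ▸ P.mul_mem_left a ω hωP)) hP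

lemma centralizer_costableOps_subset (hsimple : IsHSimple k H ρA)
    (hP : ∃ P : TwoSidedIdeal A, IsCoatom P ∧
      ∀ a : A, (∀ b : A, a * b - b * a ∈ P) → ∃ c : k, a - algebraMap k A c ∈ P) :
    (costableOps ρA.toLinearMap).centralizer ⊆ Set.range (algebraMap k (Module.End k A)) := by
  intro φ hφ
  obtain ⟨P, hPmax, hPcen⟩ := hP
  have hcomm : ∀ g ∈ costableOps ρA.toLinearMap, ∀ a, g (φ a) = φ (g a) :=
    fun g hg a => LinearMap.congr_fun (Set.mem_centralizer_iff.1 hφ g hg) a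
  set ω := φ 1
  have hleft : ∀ a, φ a = a * ω := fun a => by
    simpa using (hcomm _ (mulLeft_mem_costableOps _ a) 1).symm
  have hright : ∀ a, φ a = ω * a := fun a => by
    simpa using (hcomm _ (mulRight_mem_costableOps _ a) 1).symm
  have hco : ρA ω = ω ⊗ₜ[k] 1 := by
    refine sub_eq_zero.1 (eq_zero_of_forall_rightSlice_eq_zero _ fun f => ?_)
    have h1 : dualAction ρA.toLinearMap f 1 = f 1 • 1 := by
      simp [dualAction, Algebra.TensorProduct.one_def]
    have h2 := hcomm _ (dualAction_mem_costableOps _ f) 1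
    rw [h1, map_smul] at h2
    simpa [dualAction, sub_eq_zero] using h2
  obtain ⟨c, hc⟩ := hPcen ω fun b => by rw [← hright, ← hleft, sub_self]; exact P.zero_mem
  have hωc : ω = algebraMap k A c := by
    refine sub_eq_zero.1 (eq_zero_of_central_of_coinvariant ρA hsimple hPmax.1 (fun a => ?_) ?_ hc)
    · rw [mul_sub, sub_mul, ← hleft, hright, Algebra.commutes]
    · rw [map_sub, AlgHom.commutes, hco, Algebra.TensorProduct.algebraMap_apply, sub_tmul]
  refine ⟨c, LinearMap.ext fun a => ?_⟩
  rw [Module.algebraMap_end_apply, hleft, hωc, Algebra.smul_def, Algebra.commutes]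

lemma isInvariant_lTensor_costableOps_of_isCostable {R : Type*} [Ring R] [Algebra k R]
    {I : TwoSidedIdeal (R ⊗[k] A)}
    (hI : IsCostable k H (((Algebra.TensorProduct.assoc k k k R A H).symm.toAlgHom).comp
      (Algebra.TensorProduct.map (AlgHom.id k R) ρA)) I) :
    ((TwoSidedIdeal.asIdeal I).restrictScalars k).IsInvariant
      (LinearMap.lTensor R '' costableOps ρA.toLinearMap) := by
  rintro _ ⟨_, ((⟨a, rfl⟩ | ⟨a, rfl⟩) | ⟨f, rfl⟩), rfl⟩ u hu
  · rw [LinearMap.lTensor_mulLeft]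
    exact I.mul_mem_left _ _ hu
  · rw [LinearMap.lTensor_mulRight]
    exact I.mul_mem_right _ _ hu
  · rw [← dualAction_lTensor]
    exact (isCostable_iff _ I).1 hI u hu f

end ComoduleAlgebra

end

open TensorProduct MulOpposite in
theorem tensor_with_simple_algebra_H_simple_general
    (k : Type u) [Field k] (H : Type u) [Ring H] [HopfAlgebra k H]
    (R : Type u) [Ring R] [Algebra k R] [FiniteDimensional k R] [IsSimpleRing R]
    (A : Type u) [Ring A] [Algebra k A]
    (ρA : A →ₐ[k] A ⊗[k] H)
    (hsimple : IsHSimple k H ρA)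
    (hP : ∃ P : TwoSidedIdeal A, IsCoatom P ∧
      ∀ a : A, (∀ b : A, a * b - b * a ∈ P) → ∃ c : k, a - algebraMap k A c ∈ P) :
    IsHSimple k H
      (((Algebra.TensorProduct.assoc k k k R A H).symm.toAlgHom).comp
        (Algebra.TensorProduct.map (AlgHom.id k R) ρA)) := by
  intro I hI
  obtain ⟨V, hV⟩ := exists_eq_tensorRight_of_isInvariant
    (eq_bot_or_eq_top_of_isInvariant_costableOps ρA hsimple)
    (centralizer_costableOps_subset ρA hsimple hP) _
    (isInvariant_lTensor_costableOps_of_isCostable ρA hI)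
  set J := TwoSidedIdeal.comap (Algebra.TensorProduct.includeLeft : R →ₐ[k] R ⊗[k] A) I
  have hVJ : ∀ t ∈ V, t ∈ J := fun t ht =>
    (TwoSidedIdeal.mem_comap _).2 (hV.ge (Submodule.tmul_mem_tensorRight ht 1))
  rcases IsSimpleRing.simple.eq_bot_or_eq_top J with h | h
  · have hV0 : V.tensorRight A ≤ ⊥ := Submodule.tensorRight_le_iff.2 fun t ht a => by
      simp [(TwoSidedIdeal.mem_bot R).1 (h ▸ hVJ t ht)]
    exact Or.inl <| eq_bot_iff.2 fun x hx =>
      (TwoSidedIdeal.mem_bot _).2 ((Submodule.mem_bot k).1 (hV0 (hV ▸ hx)))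
  · have h1 := (TwoSidedIdeal.mem_comap _).1 (h ▸ TwoSidedIdeal.mem_top R : (1 : R) ∈ J)
    rw [map_one] at h1
    exact Or.inr (I.one_mem_iff.1 h1)

open TensorProduct MulOpposite in
/-- **Corollary 3.8.** Let `R` be a finite dimensional simple algebra and `A` a finite
dimensional `H`-simple right `H`-comodule algebra such that `A/P` is a central simple
algebra for some maximal (two-sided) ideal `P` of `A`.  If `H` is weakly finite, then
`R ⊗ A` is an `H`-simple comodule algebra for the comodule structure `id ⊗ ρ`. -/
theorem tensor_with_simple_algebra_H_simple
    (k : Type u) [Field k] (H : Type u) [Ring H] [HopfAlgebra k H]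
    (R : Type u) [Ring R] [Algebra k R] [FiniteDimensional k R] [IsSimpleRing R]
    (A : Type u) [Ring A] [Algebra k A] [FiniteDimensional k A]
    (ρA : A →ₐ[k] A ⊗[k] H) (hcomod : IsComodule k H A ρA.toLinearMap)
    (hsimple : IsHSimple k H ρA)
    (hP : ∃ P : TwoSidedIdeal A, IsCoatom P ∧
      ∀ a : A, (∀ b : A, a * b - b * a ∈ P) → ∃ c : k, a - algebraMap k A c ∈ P)
    (hWF : WeaklyFinite H) :
    IsHSimple k H
      (((Algebra.TensorProduct.assoc k k k R A H).symm.toAlgHom).comp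
        (Algebra.TensorProduct.map (AlgHom.id k R) ρA)) :=
  tensor_with_simple_algebra_H_simple_general k H R A ρA hsimple hP
end
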